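/- arXiv:1604.08822 — 2 statements merged into one kernel-verified Lean document; each statement's English description precedes it below -/
import Mathlib

section
/- In any BDRG A, the following are equivalent: (1) (a → b) ∧ (b → d) ≤ a → d holds for all a, b, d ∈ A (transitivity axiom (Tr)); (2) a • c ≤ (a • c) • c holds for all a, c ∈ A (the contraction-type rule (tr)). -/
/-!
With `x := (a → b) ∧ (b → d)`, residuation gives `a • x ≤ b` and `b • x ≤ d`, so (tr) yields
`a • x ≤ (a • x) • x ≤ b • x ≤ d`, i.e. `x ≤ a → d`. Conversely `c` lies below both
`a → a • c` and `a • c → (a • c) • c`, so (Tr) gives `c ≤ a → (a • c) • c`.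
-/

/-- A bounded distributive lattice-ordered residuated groupoid (BDRG):
a bounded distributive lattice with operations `prod` (•), `imp` (→), `limp` (←)
satisfying the residuation law: a • b ≤ c ↔ b ≤ a → c ↔ a ≤ c ← b. -/
structure BDRG (A : Type*) [DistribLattice A] [BoundedOrder A] where
  prod : A → A → A
  imp : A → A → A
  limp : A → A → A
  res_imp : ∀ a b c : A, prod a b ≤ c ↔ b ≤ imp a c
  res_limp : ∀ a b c : A, prod a b ≤ c ↔ a ≤ limp c b

namespace BDRG

variable {A : Type*} [DistribLattice A] [BoundedOrder A] (G : BDRG A)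

theorem prod_imp_le (a b : A) : G.prod a (G.imp a b) ≤ b :=
  (G.res_imp a _ b).mpr le_rfl

theorem le_imp_prod (a c : A) : c ≤ G.imp a (G.prod a c) :=
  (G.res_imp a c _).mp le_rfl

theorem le_limp_prod (a c : A) : a ≤ G.limp (G.prod a c) c :=
  (G.res_limp a c _).mp le_rfl

theorem prod_mono_right (a : A) : Monotone (G.prod a) := fun _ y h =>
  (G.res_imp a _ _).mpr (h.trans (G.le_imp_prod a y))

theorem prod_mono_left (c : A) : Monotone (G.prod · c) := fun _ y h =>
  (G.res_limp _ c _).mpr (h.trans (G.le_limp_prod y c))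

theorem prod_le_prod_prod_of_imp_trans
    (htr : ∀ a b d : A, G.imp a b ⊓ G.imp b d ≤ G.imp a d) (a c : A) :
    G.prod a c ≤ G.prod (G.prod a c) c := by
  rw [G.res_imp]
  exact (le_inf (G.le_imp_prod a c) (G.le_imp_prod _ c)).trans (htr _ _ _)

theorem imp_trans_of_prod_le_prod_prod
    (hcontr : ∀ a c : A, G.prod a c ≤ G.prod (G.prod a c) c) (a b d : A) :
    G.imp a b ⊓ G.imp b d ≤ G.imp a d := by
  rw [← G.res_imp]
  set x := G.imp a b ⊓ G.imp b d
  have hax : G.prod a x ≤ b := (G.prod_mono_right a inf_le_left).trans (G.prod_imp_le a b)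
  have hbx : G.prod b x ≤ d := (G.prod_mono_right b inf_le_right).trans (G.prod_imp_le b d)
  calc G.prod a x ≤ G.prod (G.prod a x) x := hcontr a x
    _ ≤ G.prod b x := G.prod_mono_left x hax
    _ ≤ d := hbx

end BDRG

theorem corr_Tr_tr {A : Type*} [DistribLattice A] [BoundedOrder A] (G : BDRG A) :
    (∀ a b d : A, G.imp a b ⊓ G.imp b d ≤ G.imp a d) ↔
    (∀ a c : A, G.prod a c ≤ G.prod (G.prod a c) c) :=
  ⟨G.prod_le_prod_prod_of_imp_trans, G.imp_trans_of_prod_le_prod_prod⟩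
end

section
/- Let W be a set and R a binary relation on W, with the powerset operations →₂, •₂ defined from R as: X →₂ Y = {w | ∀u (w R u ∧ u ∈ X → u ∈ Y)} and X •₂ Y = {w | ∃u (u R w ∧ w ∈ X ∧ u ∈ Y)}, and let Wᶜ{u} denote W \ {u}. Then the quasi-inequality ∀x,y,u,v [ ({x} •₂ {y} ⊆ Wᶜ{u}) ∧ (({y} →₂ Wᶜ{v}) ⊆ Wᶜ{u}) → x ≠ u ] holds if and only if R is symmetric, i.e. ∀x,y (x R y implies y R x). -/
/-- Binary relational implication: X →₂ Y = {w | ∀u (w R u ∧ u ∈ X → u ∈ Y)}. -/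
def impR {W : Type*} (R : W → W → Prop) (X Y : Set W) : Set W :=
  {w | ∀ u, R w u → u ∈ X → u ∈ Y}

/-- Binary relational product: X •₂ Y = {w | ∃u (u R w ∧ w ∈ X ∧ u ∈ Y)}. -/
def prodR {W : Type*} (R : W → W → Prop) (X Y : Set W) : Set W :=
  {w | ∃ u, R u w ∧ w ∈ X ∧ u ∈ Y}

/-- The ALBA-output quasi-inequality for (Sym) holds in the powerset algebra over
(W, R) if and only if R is symmetric. -/
theorem Sym_corresponds_symmetric {W : Type*} (R : W → W → Prop) :
    (∀ x y u v : W,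
      prodR R {x} {y} ⊆ ({u} : Set W)ᶜ →
      impR R {y} (({v} : Set W)ᶜ) ⊆ ({u} : Set W)ᶜ →
      x ≠ u) ↔
    (∀ x y : W, R x y → R y x) := by
  constructor
  · intro h x y hxy
    by_contra hnyx
    refine h x y x y ?_ ?_ rfl
    · rintro w ⟨u, hu, hw, huy⟩ hwx
      simp only [Set.mem_singleton_iff] at hw huy hwx
      subst hwx; subst huy
      exact hnyx hu
    · intro w hw hwx
      simp only [Set.mem_singleton_iff] at hwx
      subst hwx
      exact hw y hxy rfl rfl
  · intro hsym x y u v h1 h2 hxu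
    subst hxu
    have hx : x ∉ impR R {y} (({v} : Set W)ᶜ) := fun hmem => h2 hmem rfl
    simp only [impR, Set.mem_setOf_eq, Set.mem_singleton_iff, Set.mem_compl_iff,
      not_forall] at hx
    obtain ⟨w, hrw, hwy, hwv⟩ := hx
    subst hwy
    exact h1 ⟨w, hsym x w hrw, rfl, rfl⟩ rfl
end
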